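/- Let X ⊆ ℝ² be a finite set such that no three points of X are collinear and no four points of X lie on a common circle. Suppose x₁, x₂, y₁, y₂ ∈ X are four distinct points with V_{x₁} ∩ V_{x₂} ≠ ∅ and V_{y₁} ∩ V_{y₂} ≠ ∅ (i.e., {x₁,x₂} and {y₁,y₂} are Delaunay edges of X). Then the closed segments [x₁, x₂] and [y₁, y₂] are disjoint. In particular, the edges of the Delaunay graph (and hence of any alpha complex on X) form a planar graph with non-crossing straight-line edges. -/

import Mathlib

/-!
A point common to the Voronoi regions of `x₁` and `x₂` is the centre of a sphere `s₁` through
`x₁, x₂` with no point of `X` inside it, i.e. `0 ≤ s₁.power z` for `z ∈ X`; likewise a sphere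
`s₂` through `y₁, y₂`. The difference `s₁.power - s₂.power` is affine, `≤ 0` at `x₁, x₂` and
`≥ 0` at `y₁, y₂`, strictly at one point of each pair because no four points of `X` are
concyclic. So it is `< 0` on the open segment `(x₁, x₂)` but `≥ 0` on `[y₁, y₂]`, and vice versa:
the closed segments can only meet at a common endpoint.
-/

open Set EuclideanGeometry

namespace EuclideanGeometry.Sphere

theorem power_eq_zero_of_mem {P : Type*} [MetricSpace P] {s : Sphere P} {p : P} (hp : p ∈ s) :
    s.power p = 0 := by
  rw [power, mem_sphere.mp hp, sub_self]

theorem power_le_power_of_mem {P : Type*} [MetricSpace P] {s t : Sphere P} {p : P} (hp : p ∈ s)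
    (ht : 0 ≤ t.power p) : s.power p ≤ t.power p :=
  (power_eq_zero_of_mem hp).trans_le ht

theorem power_lt_power_of_mem_of_notMem {P : Type*} [MetricSpace P] {s t : Sphere P} {p : P}
    (hps : p ∈ s) (hr : 0 ≤ t.radius) (ht : 0 ≤ t.power p) (hpt : p ∉ t) :
    s.power p < t.power p :=
  (power_le_power_of_mem hps ht).lt_of_ne fun h =>
    hpt <| (power_eq_zero_iff_mem_sphere hr).1 <| h ▸ power_eq_zero_of_mem hps

variable {E : Type*} [NormedAddCommGroup E] [InnerProductSpace ℝ E]

theorem power_sub_power_add_smul (s₁ s₂ : Sphere E) (u v : E) {a b : ℝ} (hab : a + b = 1) :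
    s₁.power (a • u + b • v) - s₂.power (a • u + b • v) =
      a * (s₁.power u - s₂.power u) + b * (s₁.power v - s₂.power v) := by
  have dist_sq : ∀ z c : E, dist z c ^ 2 = ‖z‖ ^ 2 - 2 * inner ℝ z c + ‖c‖ ^ 2 := fun z c => by
    rw [dist_eq_norm, norm_sub_sq_real]
  simp only [power, dist_sq, inner_add_left, real_inner_smul_left]
  linear_combination (‖s₂.center‖ ^ 2 - s₂.radius ^ 2 - ‖s₁.center‖ ^ 2 + s₁.radius ^ 2) * hab

variable {s₁ s₂ : Sphere E} {u v w : E}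

theorem power_le_power_of_mem_segment (hu : s₁.power u ≤ s₂.power u)
    (hv : s₁.power v ≤ s₂.power v) (hw : w ∈ segment ℝ u v) : s₁.power w ≤ s₂.power w := by
  obtain ⟨a, b, ha, hb, hab, rfl⟩ := hw
  have := power_sub_power_add_smul s₁ s₂ u v hab
  nlinarith [mul_nonneg ha (sub_nonneg.2 hu), mul_nonneg hb (sub_nonneg.2 hv)]

theorem power_lt_power_of_mem_openSegment (hu : s₁.power u ≤ s₂.power u)
    (hv : s₁.power v ≤ s₂.power v) (huv : s₁.power u < s₂.power u ∨ s₁.power v < s₂.power v)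
    (hw : w ∈ openSegment ℝ u v) : s₁.power w < s₂.power w := by
  obtain ⟨a, b, ha, hb, hab, rfl⟩ := hw
  have := power_sub_power_add_smul s₁ s₂ u v hab
  rcases huv with hu' | hv'
  · nlinarith [mul_pos ha (sub_pos.2 hu'), mul_nonneg hb.le (sub_nonneg.2 hv)]
  · nlinarith [mul_nonneg ha.le (sub_nonneg.2 hu), mul_pos hb (sub_pos.2 hv')]

theorem disjoint_segment_of_power_separated {x₁ x₂ y₁ y₂ : E}
    (hx₁ : s₁.power x₁ ≤ s₂.power x₁) (hx₂ : s₁.power x₂ ≤ s₂.power x₂)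
    (hx : s₁.power x₁ < s₂.power x₁ ∨ s₁.power x₂ < s₂.power x₂)
    (hy₁ : s₂.power y₁ ≤ s₁.power y₁) (hy₂ : s₂.power y₂ ≤ s₁.power y₂)
    (hy : s₂.power y₁ < s₁.power y₁ ∨ s₂.power y₂ < s₁.power y₂)
    (h₁₁ : x₁ ≠ y₁) (h₁₂ : x₁ ≠ y₂) (h₂₁ : x₂ ≠ y₁) (h₂₂ : x₂ ≠ y₂) :
    Disjoint (segment ℝ x₁ x₂) (segment ℝ y₁ y₂) := by
  rw [Set.disjoint_left]
  intro w hwx hwy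
  by_cases hxo : w ∈ openSegment ℝ x₁ x₂
  · exact (power_lt_power_of_mem_openSegment hx₁ hx₂ hx hxo).not_ge
      (power_le_power_of_mem_segment hy₁ hy₂ hwy)
  by_cases hyo : w ∈ openSegment ℝ y₁ y₂
  · exact (power_lt_power_of_mem_openSegment hy₁ hy₂ hy hyo).not_ge
      (power_le_power_of_mem_segment hx₁ hx₂ hwx)
  rw [← insert_endpoints_openSegment] at hwx hwy
  simp only [mem_insert_iff, hxo, hyo, or_false] at hwx hwy
  rcases hwx with rfl | rfl <;> rcases hwy with h | h <;> contradiction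

end EuclideanGeometry.Sphere

def voronoiCell {P : Type*} [MetricSpace P] (X : Set P) (x : P) : Set P :=
  {p | ∀ z ∈ X, dist p x ≤ dist p z}

theorem exists_sphere_of_voronoiCell_inter_nonempty {P : Type*} [MetricSpace P] {X : Set P}
    {x₁ x₂ : P} (hx₁ : x₁ ∈ X) (hx₂ : x₂ ∈ X)
    (h : (voronoiCell X x₁ ∩ voronoiCell X x₂).Nonempty) :
    ∃ s : Sphere P, x₁ ∈ s ∧ x₂ ∈ s ∧ 0 ≤ s.radius ∧ ∀ z ∈ X, 0 ≤ s.power z := by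
  obtain ⟨p, hp₁, hp₂⟩ := h
  refine ⟨⟨p, dist x₁ p⟩, rfl, ?_, dist_nonneg, fun z hz => ?_⟩
  · change dist x₂ p = dist x₁ p
    rw [dist_comm x₂, dist_comm x₁]
    exact le_antisymm (hp₂ x₁ hx₁) (hp₁ x₂ hx₂)
  · rw [Sphere.power_nonneg_iff_radius_le_dist_center dist_nonneg, dist_comm z, dist_comm x₁]
    exact hp₁ z hz

theorem delaunay_edges_disjoint_general (X : Finset (EuclideanSpace ℝ (Fin 2)))
    (h4 : ∀ a ∈ X, ∀ b ∈ X, ∀ c ∈ X, ∀ d ∈ X,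
      a ≠ b → a ≠ c → a ≠ d → b ≠ c → b ≠ d → c ≠ d →
      ¬ ∃ (o : EuclideanSpace ℝ (Fin 2)) (ρ : ℝ),
        dist a o = ρ ∧ dist b o = ρ ∧ dist c o = ρ ∧ dist d o = ρ)
    (x₁ x₂ y₁ y₂ : EuclideanSpace ℝ (Fin 2))
    (hx₁ : x₁ ∈ X) (hx₂ : x₂ ∈ X) (hy₁ : y₁ ∈ X) (hy₂ : y₂ ∈ X)
    (h12 : x₁ ≠ x₂) (h11 : x₁ ≠ y₁) (h12' : x₁ ≠ y₂) (h21 : x₂ ≠ y₁) (h22 : x₂ ≠ y₂)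
    (hyy : y₁ ≠ y₂)
    (hVx : ({p : EuclideanSpace ℝ (Fin 2) | ∀ z ∈ X, dist p x₁ ≤ dist p z} ∩
            {p : EuclideanSpace ℝ (Fin 2) | ∀ z ∈ X, dist p x₂ ≤ dist p z}).Nonempty)
    (hVy : ({p : EuclideanSpace ℝ (Fin 2) | ∀ z ∈ X, dist p y₁ ≤ dist p z} ∩
            {p : EuclideanSpace ℝ (Fin 2) | ∀ z ∈ X, dist p y₂ ≤ dist p z}).Nonempty) :
    Disjoint (segment ℝ x₁ x₂) (segment ℝ y₁ y₂) := by
  obtain ⟨s₁, hx₁s, hx₂s, hr₁, hs₁⟩ := exists_sphere_of_voronoiCell_inter_nonempty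
    (X := (X : Set (EuclideanSpace ℝ (Fin 2)))) hx₁ hx₂ hVx
  obtain ⟨s₂, hy₁s, hy₂s, hr₂, hs₂⟩ := exists_sphere_of_voronoiCell_inter_nonempty
    (X := (X : Set (EuclideanSpace ℝ (Fin 2)))) hy₁ hy₂ hVy
  have hx : x₁ ∉ s₂ ∨ x₂ ∉ s₂ := not_and_or.1 fun h => h4 x₁ hx₁ x₂ hx₂ y₁ hy₁ y₂ hy₂
    h12 h11 h12' h21 h22 hyy ⟨s₂.center, s₂.radius, h.1, h.2, hy₁s, hy₂s⟩
  have hy : y₁ ∉ s₁ ∨ y₂ ∉ s₁ := not_and_or.1 fun h => h4 x₁ hx₁ x₂ hx₂ y₁ hy₁ y₂ hy₂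
    h12 h11 h12' h21 h22 hyy ⟨s₁.center, s₁.radius, hx₁s, hx₂s, h.1, h.2⟩
  exact Sphere.disjoint_segment_of_power_separated
    (Sphere.power_le_power_of_mem hx₁s (hs₂ x₁ hx₁))
    (Sphere.power_le_power_of_mem hx₂s (hs₂ x₂ hx₂))
    (hx.imp (Sphere.power_lt_power_of_mem_of_notMem hx₁s hr₂ (hs₂ x₁ hx₁))
      (Sphere.power_lt_power_of_mem_of_notMem hx₂s hr₂ (hs₂ x₂ hx₂)))
    (Sphere.power_le_power_of_mem hy₁s (hs₁ y₁ hy₁))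
    (Sphere.power_le_power_of_mem hy₂s (hs₁ y₂ hy₂))
    (hy.imp (Sphere.power_lt_power_of_mem_of_notMem hy₁s hr₁ (hs₁ y₁ hy₁))
      (Sphere.power_lt_power_of_mem_of_notMem hy₂s hr₁ (hs₁ y₂ hy₂)))
    h11 h12' h21 h22

/-- **Delaunay edges do not cross.**
Let `X ⊆ ℝ²` be finite with no three points collinear and no four points on a common
circle. If `{x₁, x₂}` and `{y₁, y₂}` are Delaunay edges of `X` (their Voronoi regions
intersect) on four distinct vertices, then the closed segments `[x₁, x₂]` and `[y₁, y₂]`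
are disjoint. -/
theorem delaunay_edges_disjoint (X : Finset (EuclideanSpace ℝ (Fin 2)))
    (h3 : ∀ x ∈ X, ∀ y ∈ X, ∀ z ∈ X, x ≠ y → x ≠ z → y ≠ z →
      ¬ Collinear ℝ ({x, y, z} : Set (EuclideanSpace ℝ (Fin 2))))
    (h4 : ∀ a ∈ X, ∀ b ∈ X, ∀ c ∈ X, ∀ d ∈ X,
      a ≠ b → a ≠ c → a ≠ d → b ≠ c → b ≠ d → c ≠ d →
      ¬ ∃ (o : EuclideanSpace ℝ (Fin 2)) (ρ : ℝ),
        dist a o = ρ ∧ dist b o = ρ ∧ dist c o = ρ ∧ dist d o = ρ)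
    (x₁ x₂ y₁ y₂ : EuclideanSpace ℝ (Fin 2))
    (hx₁ : x₁ ∈ X) (hx₂ : x₂ ∈ X) (hy₁ : y₁ ∈ X) (hy₂ : y₂ ∈ X)
    (h12 : x₁ ≠ x₂) (h11 : x₁ ≠ y₁) (h12' : x₁ ≠ y₂) (h21 : x₂ ≠ y₁) (h22 : x₂ ≠ y₂)
    (hyy : y₁ ≠ y₂)
    (hVx : ({p : EuclideanSpace ℝ (Fin 2) | ∀ z ∈ X, dist p x₁ ≤ dist p z} ∩
            {p : EuclideanSpace ℝ (Fin 2) | ∀ z ∈ X, dist p x₂ ≤ dist p z}).Nonempty)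
    (hVy : ({p : EuclideanSpace ℝ (Fin 2) | ∀ z ∈ X, dist p y₁ ≤ dist p z} ∩
            {p : EuclideanSpace ℝ (Fin 2) | ∀ z ∈ X, dist p y₂ ≤ dist p z}).Nonempty) :
    Disjoint (segment ℝ x₁ x₂) (segment ℝ y₁ y₂) :=
  delaunay_edges_disjoint_general X h4 x₁ x₂ y₁ y₂ hx₁ hx₂ hy₁ hy₂ h12 h11 h12' h21 h22 hyy hVx hVy
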